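/- arXiv:2012.07614 — 2 statements merged into one kernel-verified Lean document; each statement's English description precedes it below -/
import Mathlib

section
/- Let v ∈ (0,1) and let p = (Σ₁ⁱ,Σ₂ⁱ,Σ₃ⁱ) lie on the Kasner circle. Define the line ℓ(η) = η·p + (η-1)·(2,-1,-1)/v for η ∈ ℝ. Then ℓ(η) lies on the Kasner circle if and only if η = 1 or η = g, where g = (1-v²)/(1+v²+Σ₁ⁱ v). -/
/-!
With `T = (2,-1,-1)` we have `∑ Tᵢ = 0`, `|T|² = 6` and `⟨p, T⟩ = 3 Σ₁ⁱ`, so the line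
`ℓ(η) = η p + (η - 1) T / v` stays in the plane `∑ Σᵢ = 0` and
`v² (|ℓ(η)|² - 6) = 6 (η - 1) (η (1 + v² + Σ₁ⁱ v) + v² - 1)`.
The two roots of this quadratic are `η = 1` and `η = g`.
-/

lemma typeII_line_sum_eq_zero (v S₁ S₂ S₃ η : ℝ) (hsum : S₁ + S₂ + S₃ = 0) :
    (η*S₁ + (η-1)*2/v) + (η*S₂ + (η-1)*(-1)/v) + (η*S₃ + (η-1)*(-1)/v) = 0 := by
  linear_combination η * hsum

lemma typeII_line_norm_sq_sub_six {v S₁ S₂ S₃ : ℝ} (hv : v ≠ 0)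
    (hsum : S₁ + S₂ + S₃ = 0) (hsq : S₁^2 + S₂^2 + S₃^2 = 6) (η : ℝ) :
    v^2 * ((η*S₁ + (η-1)*2/v)^2 + (η*S₂ + (η-1)*(-1)/v)^2 + (η*S₃ + (η-1)*(-1)/v)^2 - 6) =
      6 * ((η - 1) * (η * (1 + v^2 + S₁*v) + v^2 - 1)) := by
  field_simp
  linear_combination η^2 * v^2 * hsq - 2 * η * (η - 1) * v * hsum

lemma typeII_line_norm_sq_eq_six_iff {v S₁ S₂ S₃ : ℝ} (hv : v ≠ 0)
    (hsum : S₁ + S₂ + S₃ = 0) (hsq : S₁^2 + S₂^2 + S₃^2 = 6) (η : ℝ) :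
    (η*S₁ + (η-1)*2/v)^2 + (η*S₂ + (η-1)*(-1)/v)^2 + (η*S₃ + (η-1)*(-1)/v)^2 = 6 ↔
      (η - 1) * (η * (1 + v^2 + S₁*v) + v^2 - 1) = 0 := by
  rw [← sub_eq_zero, ← mul_right_inj' (pow_ne_zero 2 hv), mul_zero,
    typeII_line_norm_sq_sub_six hv hsum hsq, mul_eq_zero, or_iff_right (by norm_num)]

theorem typeII_line_meets_kasner (v S₁ S₂ S₃ : ℝ) (hv : v ∈ Set.Ioo (0:ℝ) 1)
    (hsum : S₁ + S₂ + S₃ = 0) (hsq : S₁^2 + S₂^2 + S₃^2 = 6)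
    (hden : 1 + v^2 + S₁ * v ≠ 0) (η : ℝ) :
    ((η*S₁ + (η-1)*2/v) + (η*S₂ + (η-1)*(-1)/v) + (η*S₃ + (η-1)*(-1)/v) = 0 ∧
     (η*S₁ + (η-1)*2/v)^2 + (η*S₂ + (η-1)*(-1)/v)^2 + (η*S₃ + (η-1)*(-1)/v)^2 = 6) ↔
    (η = 1 ∨ η = (1 - v^2)/(1 + v^2 + S₁*v)) := by
  rw [and_iff_right (typeII_line_sum_eq_zero v S₁ S₂ S₃ η hsum),
    typeII_line_norm_sq_eq_six_iff hv.1.ne' hsum hsq, mul_eq_zero, sub_eq_zero, eq_div_iff hden]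
  exact or_congr_right ⟨fun h => by linarith, fun h => by linarith⟩
end

section
/- The Farey map F on [0,1], defined by F(x) = x/(1-x) for 0 ≤ x ≤ 1/2 and F(x) = (1-x)/x for 1/2 ≤ x ≤ 1, has x* = (√13 - 1)/6 as a periodic point of minimal period 3: F³(x*) = x*, while F(x*) ≠ x* and F²(x*) ≠ x*. -/
/-!
On `[2/5, 1/2]` the orbit `x ↦ x/(1-x) ↦ (1-2x)/x ↦ (1-2x)/(3x-1)` stays on the branches
left, right, left, so `F³ x = x` there amounts to `3x² + x - 1 = 0`, whose positive root is
`(√13 - 1)/6`. The same root cannot satisfy `F x = x` (i.e. `x = 0`) or `F² x = x`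
(i.e. `x² + 2x - 1 = 0`, which together with the quadratic forces `x = 2/5`).
-/

/-- The Farey map on the unit interval. -/
noncomputable def fareyMap (x : ℝ) : ℝ := if x ≤ 1/2 then x/(1-x) else (1-x)/x

lemma fareyMap_of_le_half {x : ℝ} (hx : x ≤ 1/2) : fareyMap x = x / (1 - x) := if_pos hx

lemma fareyMap_of_half_lt {x : ℝ} (hx : 1/2 < x) : fareyMap x = (1 - x) / x := if_neg hx.not_ge

lemma fareyMap_fareyMap_of_mem_Ioc {x : ℝ} (h₁ : 1/3 < x) (h₂ : x ≤ 1/2) :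
    fareyMap (fareyMap x) = (1 - 2 * x) / x := by
  have hx : 1 - x ≠ 0 := by linarith
  have hFx : 1/2 < x / (1 - x) := by rw [lt_div_iff₀ (by linarith)]; linarith
  rw [fareyMap_of_le_half h₂, fareyMap_of_half_lt hFx]
  field_simp
  ring

lemma fareyMap_iterate_three_of_mem_Icc {x : ℝ} (h₁ : 2/5 ≤ x) (h₂ : x ≤ 1/2) :
    fareyMap (fareyMap (fareyMap x)) = (1 - 2 * x) / (3 * x - 1) := by
  have hx : 0 < x := by linarith
  have hF2x : (1 - 2 * x) / x ≤ 1/2 := by rw [div_le_iff₀ hx]; linarith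
  rw [fareyMap_fareyMap_of_mem_Ioc (by linarith) h₂, fareyMap_of_le_half hF2x]
  have h3x : 3 * x - 1 ≠ 0 := by linarith
  field_simp
  ring

lemma fareyMap_period_three_of_quadratic_eq_zero {x : ℝ} (hpos : 0 < x) (hx : 3 * x ^ 2 + x - 1 = 0) :
    fareyMap (fareyMap (fareyMap x)) = x ∧ fareyMap x ≠ x ∧ fareyMap (fareyMap x) ≠ x := by
  have h₁ : 2/5 < x := by nlinarith
  have h₂ : x < 1/2 := by nlinarith
  refine ⟨?_, ?_, ?_⟩
  · rw [fareyMap_iterate_three_of_mem_Icc h₁.le h₂.le, div_eq_iff (by linarith)]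
    linarith
  · rw [fareyMap_of_le_half h₂.le, ne_eq, div_eq_iff (by linarith)]
    nlinarith
  · rw [fareyMap_fareyMap_of_mem_Ioc (by linarith) h₂.le, ne_eq, div_eq_iff hpos.ne']
    intro h
    linarith

theorem farey_period_three :
    fareyMap (fareyMap (fareyMap ((Real.sqrt 13 - 1)/6))) = (Real.sqrt 13 - 1)/6 ∧
    fareyMap ((Real.sqrt 13 - 1)/6) ≠ (Real.sqrt 13 - 1)/6 ∧
    fareyMap (fareyMap ((Real.sqrt 13 - 1)/6)) ≠ (Real.sqrt 13 - 1)/6 := by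
  have hsq : Real.sqrt 13 ^ 2 = 13 := Real.sq_sqrt (by norm_num)
  have hgt : 1 < Real.sqrt 13 := by nlinarith [Real.sqrt_nonneg 13]
  exact fareyMap_period_three_of_quadratic_eq_zero (by linarith) (by nlinarith)
end
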